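/- Let M be the free Lie algebra over ℚ on two generators x, y, let N be the Lie ideal of M generated by y, and let M^PL = M/[N,N] (the polylogarithmic Lie algebra of the projective line minus three points). Then the family consisting of x together with (ad x)^n(y) for all natural numbers n is a ℚ-vector space basis of M^PL. -/

import Mathlib

inductive G2 : Type
  | x | y
deriving DecidableEq

noncomputable section

abbrev M04 : Type := FreeLieAlgebra ℚ G2

def X : M04 := FreeLieAlgebra.of ℚ G2.x
def Y : M04 := FreeLieAlgebra.of ℚ G2.y

/-- The Lie ideal `N` generated by `y`. -/
def NId : LieIdeal ℚ M04 := LieSubmodule.lieSpan ℚ M04 {Y}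

/-- The polylogarithmic Lie algebra `M^PL = M / [N, N]` of `ℙ¹ ∖ {0, 1, ∞}`. -/
abbrev MPL : Type := M04 ⧸ (⁅NId, NId⁆ : LieIdeal ℚ M04)

/-- Projection `M → M^PL`. -/
def pl (z : M04) : MPL := LieSubmodule.Quotient.mk (N := ⁅NId, NId⁆) z

def Xp : MPL := pl X
def Yp : MPL := pl Y

/-- Index type for the claimed basis: `x` together with `(ad x)^n (y)`, `n : ℕ`. -/
def basisFam : Option ℕ → MPL
  | none => Xp
  | some n => (LieAlgebra.ad ℚ MPL Xp ^ n) Yp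

/-! ### Auxiliary material -/

attribute [local instance] LieRing.ofAssociativeRing

abbrev W : Type := ℚ × Polynomial ℚ

def Aop : W →ₗ[ℚ] W where
  toFun v := (0, Polynomial.X * v.2)
  map_add' u v := by simp [mul_add, Prod.ext_iff]
  map_smul' c v := by simp [Prod.ext_iff, mul_smul_comm]

def Bop (n : ℕ) : W →ₗ[ℚ] W where
  toFun v := (0, v.1 • (Polynomial.X ^ (n + 1) : Polynomial ℚ))
  map_add' u v := by simp [Prod.ext_iff, add_smul]
  map_smul' c v := by simp [Prod.ext_iff, smul_smul]

def J : Submodule ℚ (Module.End ℚ W) where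
  carrier := {T | ∀ v : W, T v = (0, v.1 • (T (1, 0)).2)}
  zero_mem' := by intro v; simp; rfl
  add_mem' := by
    intro T S hT hS v
    simp only [LinearMap.add_apply, hT v, hS v, Prod.mk_add_mk, add_zero, Prod.snd_add, smul_add]
  smul_mem' := by
    intro c T hT v
    simp only [LinearMap.smul_apply, hT v, Prod.smul_mk, smul_zero, Prod.smul_snd,
      smul_comm c v.1]

lemma Bop_memJ (n : ℕ) : Bop n ∈ J := by
  intro v; simp [Bop]

lemma J_lie_zero {T S : Module.End ℚ W} (hT : T ∈ J) (hS : S ∈ J) : ⁅T, S⁆ = 0 := by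
  apply LinearMap.ext; intro v
  have h1 : T (S v) = 0 := by rw [hS v, hT (0, v.1 • (S (1,0)).2)]; simp
  have h2 : S (T v) = 0 := by rw [hT v, hS (0, v.1 • (T (1,0)).2)]; simp
  simp [Ring.lie_def, Module.End.mul_apply, h1, h2]

lemma lie_A_memJ {T : Module.End ℚ W} (hT : T ∈ J) : ⁅Aop, T⁆ ∈ J := by
  intro v
  have h1 : T (Aop v) = 0 := by rw [hT (Aop v)]; simp [Aop]
  have h2 : Aop (T v) = (0, v.1 • (Polynomial.X * (T (1,0)).2)) := by
    rw [hT v]; simp [Aop, mul_smul_comm]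
  have h3 : T (Aop (1, 0)) = 0 := by rw [hT (Aop (1,0))]; simp [Aop]
  have h4 : Aop (T (1, 0)) = (0, Polynomial.X * (T (1,0)).2) := by simp [Aop]
  show (⁅Aop, T⁆ : Module.End ℚ W) v = _
  simp [Ring.lie_def, Module.End.mul_apply, h1, h2, h3, h4]

def K : Submodule ℚ (Module.End ℚ W) := Submodule.span ℚ {Aop} ⊔ J

lemma K_decomp {T : Module.End ℚ W} (hT : T ∈ K) :
    ∃ (a : ℚ) (S : Module.End ℚ W), S ∈ J ∧ T = a • Aop + S := by
  rcases Submodule.mem_sup.1 hT with ⟨u, hu, S, hS, rfl⟩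
  rcases Submodule.mem_span_singleton.1 hu with ⟨a, rfl⟩
  exact ⟨a, S, hS, rfl⟩

lemma lie_decomp (a : ℚ) (T' S : Module.End ℚ W) :
    ⁅a • Aop + T', S⁆ = a • ⁅Aop, S⁆ + ⁅T', S⁆ := by
  show (a • Aop + T') * S - S * (a • Aop + T') =
    a • (Aop * S - S * Aop) + (T' * S - S * T')
  rw [add_mul, mul_add, smul_mul_assoc, mul_smul_comm, smul_sub]
  abel

lemma lie_decomp' (b : ℚ) (T S' : Module.End ℚ W) :
    ⁅T, b • Aop + S'⁆ = b • ⁅T, Aop⁆ + ⁅T, S'⁆ := by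
  show T * (b • Aop + S') - (b • Aop + S') * T =
    b • (T * Aop - Aop * T) + (T * S' - S' * T)
  rw [mul_add, add_mul, mul_smul_comm, smul_mul_assoc, smul_sub]
  abel

lemma lie_K_J {T S : Module.End ℚ W} (hT : T ∈ K) (hS : S ∈ J) : ⁅T, S⁆ ∈ J := by
  rcases K_decomp hT with ⟨a, T', hT', rfl⟩
  rw [lie_decomp]
  exact J.add_mem (J.smul_mem a (lie_A_memJ hS)) (by rw [J_lie_zero hT' hS]; exact J.zero_mem)

lemma K_closed {T S : Module.End ℚ W} (hT : T ∈ K) (hS : S ∈ K) : ⁅T, S⁆ ∈ K := by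
  rcases K_decomp hS with ⟨b, S', hS', rfl⟩
  rw [lie_decomp']
  refine K.add_mem (K.smul_mem b ?_) (Submodule.mem_sup_right (lie_K_J hT hS'))
  rw [← lie_skew]
  refine K.neg_mem (Submodule.mem_sup_right ?_)
  rcases K_decomp hT with ⟨a, T', hT', rfl⟩
  rw [lie_decomp' a Aop T', lie_self, smul_zero, zero_add]
  exact lie_A_memJ hT'

def KL : LieSubalgebra ℚ (Module.End ℚ W) :=
  { K with lie_mem' := fun hx hy => K_closed hx hy }

def g2fun : G2 → Module.End ℚ W
  | G2.x => Aop
  | G2.y => Bop 0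

def f : M04 →ₗ⁅ℚ⁆ Module.End ℚ W := FreeLieAlgebra.lift ℚ g2fun

lemma f_X : f X = Aop := FreeLieAlgebra.lift_of_apply g2fun G2.x
lemma f_Y : f Y = Bop 0 := FreeLieAlgebra.lift_of_apply g2fun G2.y

def g2fun' : G2 → KL
  | G2.x => ⟨Aop, Submodule.mem_sup_left (Submodule.mem_span_singleton_self Aop)⟩
  | G2.y => ⟨Bop 0, Submodule.mem_sup_right (Bop_memJ 0)⟩

def f' : M04 →ₗ⁅ℚ⁆ KL := FreeLieAlgebra.lift ℚ g2fun'

lemma f_eq : KL.incl.comp f' = f := by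
  apply FreeLieAlgebra.hom_ext
  intro g
  cases g <;>
    simp [f, f', FreeLieAlgebra.lift_of_apply, g2fun, g2fun', LieSubalgebra.coe_incl,
      LieHom.comp_apply]

lemma f_mem_K (m : M04) : f m ∈ K := by
  rw [← f_eq]
  exact (f' m).2

def NJ : LieIdeal ℚ M04 :=
  { Submodule.comap (f : M04 →ₗ[ℚ] Module.End ℚ W) J with
    lie_mem := by
      intro x m hm
      have : f m ∈ J := hm
      show f ⁅x, m⁆ ∈ J
      rw [f.map_lie]
      exact lie_K_J (f_mem_K x) this }

lemma f_N {m : M04} (hm : m ∈ NId) : f m ∈ J := by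
  have h : NId ≤ NJ := by
    rw [NId, LieSubmodule.lieSpan_le]
    intro z hz
    rcases hz with rfl
    show f Y ∈ J
    rw [f_Y]; exact Bop_memJ 0
  exact h hm

lemma hker : (⁅NId, NId⁆ : LieIdeal ℚ M04) ≤ f.ker := by
  rw [LieSubmodule.lieIdeal_oper_eq_span, LieSubmodule.lieSpan_le]
  rintro m ⟨⟨x, hx⟩, ⟨n, hn⟩, rfl⟩
  rw [SetLike.mem_coe, LieHom.mem_ker, f.map_lie]
  exact J_lie_zero (f_N hx) (f_N hn)

def fbar : MPL →ₗ[ℚ] Module.End ℚ W :=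
  Submodule.liftQ (⁅NId, NId⁆ : LieIdeal ℚ M04).toSubmodule (f : M04 →ₗ[ℚ] Module.End ℚ W)
    (fun m hm => LinearMap.mem_ker.2 ((f.mem_ker).1 (hker hm)))

lemma fbar_pl (m : M04) : fbar (pl m) = f m := rfl

lemma pl_lie (a b : M04) : pl ⁅a, b⁆ = ⁅pl a, pl b⁆ := rfl

lemma ad_mem_N (n : ℕ) : (LieAlgebra.ad ℚ M04 X ^ n) Y ∈ NId := by
  induction n with
  | zero => exact LieSubmodule.subset_lieSpan rfl
  | succ n ih =>
    rw [pow_succ', Module.End.mul_apply, LieAlgebra.ad_apply]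
    exact NId.lie_mem ih

lemma basis_some (n : ℕ) : basisFam (some n) = pl ((LieAlgebra.ad ℚ M04 X ^ n) Y) := by
  induction n with
  | zero => simp [basisFam, Yp]
  | succ n ih =>
    show (LieAlgebra.ad ℚ MPL Xp ^ (n + 1)) Yp = _
    rw [pow_succ', Module.End.mul_apply, LieAlgebra.ad_apply,
      show (LieAlgebra.ad ℚ MPL Xp ^ n) Yp = basisFam (some n) from rfl, ih,
      pow_succ', Module.End.mul_apply, LieAlgebra.ad_apply, pl_lie]
    rfl

lemma lie_A_B (n : ℕ) : ⁅Aop, Bop n⁆ = Bop (n + 1) := by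
  apply LinearMap.ext; intro v
  apply Prod.ext <;>
    simp [Ring.lie_def, Module.End.mul_apply, Aop, Bop, mul_smul_comm, pow_succ, mul_comm]

lemma f_ad (n : ℕ) : f ((LieAlgebra.ad ℚ M04 X ^ n) Y) = Bop n := by
  induction n with
  | zero => simpa using f_Y
  | succ n ih =>
    rw [pow_succ', Module.End.mul_apply, LieAlgebra.ad_apply, f.map_lie, f_X, ih, lie_A_B]

lemma fbar_basis : (fbar ∘ basisFam) = fun o : Option ℕ => Option.casesOn' o Aop Bop := by
  funext o
  cases o with
  | none => show fbar Xp = Aop; rw [Xp, fbar_pl, f_X]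
  | some n =>
    show fbar (basisFam (some n)) = Bop n
    rw [basis_some, fbar_pl, f_ad]

def E1 : Module.End ℚ W →ₗ[ℚ] Polynomial ℚ where
  toFun T := (T (1, 0)).2
  map_add' T S := rfl
  map_smul' c T := rfl

def E2 : Module.End ℚ W →ₗ[ℚ] Polynomial ℚ where
  toFun T := (T (0, 1)).2
  map_add' T S := rfl
  map_smul' c T := rfl

lemma li_pow : LinearIndependent ℚ (fun n : ℕ => (Polynomial.X : Polynomial ℚ) ^ (n + 1)) := by
  rw [linearIndependent_iff']
  intro s g h i hi
  have hc := congrArg (fun p => Polynomial.coeff p (i + 1)) h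
  simp only [Polynomial.finset_sum_coeff, Polynomial.coeff_smul, Polynomial.coeff_X_pow,
    Polynomial.coeff_zero, smul_eq_mul, mul_ite, mul_one, mul_zero, add_left_inj] at hc
  rwa [Finset.sum_ite_eq s i g, if_pos hi] at hc

lemma liB : LinearIndependent ℚ Bop := by
  apply LinearIndependent.of_comp E1
  have : (E1 ∘ Bop) = fun n : ℕ => (Polynomial.X : Polynomial ℚ) ^ (n + 1) := by
    funext n; simp [E1, Bop]
  rw [this]
  exact li_pow

lemma A_not_mem : Aop ∉ Submodule.span ℚ (Set.range Bop) := by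
  intro h
  have hle : Submodule.span ℚ (Set.range Bop) ≤ LinearMap.ker E2 := by
    rw [Submodule.span_le]
    rintro _ ⟨n, rfl⟩
    simp [LinearMap.mem_ker, E2, Bop]
  have : E2 Aop = 0 := hle h
  simp [E2, Aop] at this

theorem stmt10 :
    LinearIndependent ℚ basisFam ∧ Submodule.span ℚ (Set.range basisFam) = ⊤ := by
  constructor
  · apply LinearIndependent.of_comp fbar
    rw [fbar_basis]
    exact liB.option A_not_mem
  · -- spanning
    set S := Submodule.span ℚ (Set.range basisFam) with hS
    have hXp : Xp ∈ S := Submodule.subset_span ⟨none, rfl⟩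
    have hYp : Yp ∈ S := by
      have : basisFam (some 0) = Yp := by simp [basisFam]
      exact this ▸ Submodule.subset_span ⟨some 0, rfl⟩
    have hXb : ∀ n, ⁅Xp, basisFam (some n)⁆ = basisFam (some (n + 1)) := by
      intro n
      show ⁅Xp, (LieAlgebra.ad ℚ MPL Xp ^ n) Yp⁆ = (LieAlgebra.ad ℚ MPL Xp ^ (n + 1)) Yp
      rw [pow_succ', Module.End.mul_apply, LieAlgebra.ad_apply]
    have hbb : ∀ m n, ⁅basisFam (some m), basisFam (some n)⁆ = 0 := by
      intro m n
      rw [basis_some, basis_some, ← pl_lie]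
      exact (LieSubmodule.Quotient.mk_eq_zero').2
        (LieSubmodule.lie_mem_lie (ad_mem_N m) (ad_mem_N n))
    have hgen : ∀ i j : Option ℕ, ⁅basisFam i, basisFam j⁆ ∈ S := by
      intro i j
      cases i with
      | none =>
        cases j with
        | none => show ⁅Xp, Xp⁆ ∈ S; rw [lie_self]; exact S.zero_mem
        | some n => rw [show basisFam none = Xp from rfl, hXb n]
                    exact Submodule.subset_span ⟨some (n+1), rfl⟩
      | some m =>
        cases j with
        | none =>
          rw [show basisFam none = Xp from rfl, ← lie_skew, hXb m]
          exact S.neg_mem (Submodule.subset_span ⟨some (m+1), rfl⟩)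
        | some n => rw [hbb m n]; exact S.zero_mem
    have hclosed : ∀ u ∈ S, ∀ v ∈ S, ⁅u, v⁆ ∈ S := by
      intro u hu v hv
      induction hu, hv using Submodule.span_induction₂ with
      | mem_mem x y hx hy =>
        rcases hx with ⟨i, rfl⟩; rcases hy with ⟨j, rfl⟩; exact hgen i j
      | zero_left y hy => rw [zero_lie]; exact S.zero_mem
      | zero_right x hx => rw [lie_zero]; exact S.zero_mem
      | add_left x y z hx hy hz h1 h2 => rw [add_lie]; exact S.add_mem h1 h2
      | add_right x y z hx hy hz h1 h2 => rw [lie_add]; exact S.add_mem h1 h2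
      | smul_left a x y hx hy h1 => rw [smul_lie]; exact S.smul_mem a h1
      | smul_right a x y hx hy h1 => rw [lie_smul]; exact S.smul_mem a h1
    let MSub : LieSubalgebra ℚ MPL :=
      { S with lie_mem' := fun hx hy => hclosed _ hx _ hy }
    let plHom : M04 →ₗ⁅ℚ⁆ MPL :=
      { (⁅NId, NId⁆ : LieIdeal ℚ M04).toSubmodule.mkQ with map_lie' := rfl }
    let gq : G2 → MSub := fun g => match g with
      | G2.x => ⟨Xp, hXp⟩
      | G2.y => ⟨Yp, hYp⟩
    let q : M04 →ₗ⁅ℚ⁆ MSub := FreeLieAlgebra.lift ℚ gq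
    have heq : MSub.incl.comp q = plHom := by
      apply FreeLieAlgebra.hom_ext
      intro g
      cases g <;>
        simp only [LieHom.comp_apply, FreeLieAlgebra.lift_of_apply, gq, q] <;> rfl
    rw [eq_top_iff]
    intro z _
    obtain ⟨m, rfl⟩ := (LieSubmodule.Quotient.surjective_mk' (⁅NId, NId⁆ : LieIdeal ℚ M04)) z
    have hz : LieSubmodule.Quotient.mk' (⁅NId, NId⁆ : LieIdeal ℚ M04) m = ((q m : MSub) : MPL) :=
      (LieHom.congr_fun heq m).symm
    rw [hz]
    exact (q m).2

end
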